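/- Lower bound on the trellis state-space size (the paper's Lemma, for the Wolff trellis): let S₁,…,S_{n−k} be a basis of a subspace S ≤ V = (𝔽₂²)ⁿ and 0 ≤ i ≤ n. Then |fᵢ(S^⊥)| · |Cᵢᵖ| · |Cᵢᶠ| ≥ |S^⊥| = 2^{n+k}; equivalently, ξᵢ = log₂|fᵢ(S^⊥)| satisfies ξᵢ ≥ n + k − log₂|Cᵢᵖ| − log₂|Cᵢᶠ|. -/

import Mathlib

/-- `V = (𝔽₂²)ⁿ`, the additive group underlying the effective Pauli group `Gₙ`. -/
abbrev PV (n : ℕ) := Fin n → ZMod 2 × ZMod 2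

/-- The symplectic form `ω(v,w) = Σᵢ (aᵢb′ᵢ + a′ᵢbᵢ)` over `𝔽₂`. -/
def sympOmega {n : ℕ} (v w : PV n) : ZMod 2 :=
  ∑ i, ((v i).1 * (w i).2 + (w i).1 * (v i).2)

lemma sympOmega_add_left {n : ℕ} (a b w : PV n) :
    sympOmega (a + b) w = sympOmega a w + sympOmega b w := by
  unfold sympOmega
  rw [← Finset.sum_add_distrib]
  refine Finset.sum_congr rfl fun i _ => ?_
  simp [Prod.fst_add, Prod.snd_add, add_mul, mul_add]
  ring

lemma sympOmega_smul_left {n : ℕ} (c : ZMod 2) (a w : PV n) :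
    sympOmega (c • a) w = c * sympOmega a w := by
  unfold sympOmega
  rw [Finset.mul_sum]
  refine Finset.sum_congr rfl fun i _ => ?_
  simp [Prod.smul_fst, Prod.smul_snd, smul_eq_mul]
  ring

/-- The symplectic orthogonal `S^⊥ = {P ∈ V : ω(P,Q) = 0 for all Q ∈ S}`. -/
def sPerp {n : ℕ} (S : Submodule (ZMod 2) (PV n)) : Submodule (ZMod 2) (PV n) where
  carrier := {P | ∀ Q ∈ S, sympOmega P Q = 0}
  add_mem' := by
    intro a b ha hb Q hQ
    rw [sympOmega_add_left, ha Q hQ, hb Q hQ, add_zero]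
  zero_mem' := by
    intro Q hQ
    simp [sympOmega]
  smul_mem' := by
    intro c a ha Q hQ
    rw [sympOmega_smul_left, ha Q hQ, mul_zero]

/-- The truncation map `πᵢ : V → V`, `(P₁,…,Pₙ) ↦ (P₁,…,Pᵢ,0,…,0)`. -/
def trunc (n i : ℕ) : PV n →ₗ[ZMod 2] PV n where
  toFun v := fun j => if (j : ℕ) < i then v j else 0
  map_add' := by
    intro a b
    funext j
    by_cases h : (j : ℕ) < i <;> simp [h]
  map_smul' := by
    intro c a
    funext j
    by_cases h : (j : ℕ) < i <;> simp [h]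

lemma sympOmega_comm {n : ℕ} (v w : PV n) : sympOmega v w = sympOmega w v := by
  unfold sympOmega
  refine Finset.sum_congr rfl fun i _ => ?_
  ring

/-- `ω` as a bilinear form. -/
def sympB (n : ℕ) : LinearMap.BilinForm (ZMod 2) (PV n) :=
  LinearMap.mk₂ (ZMod 2) sympOmega
    sympOmega_add_left sympOmega_smul_left
    (fun a b c => by
      rw [sympOmega_comm, sympOmega_add_left, sympOmega_comm b a, sympOmega_comm c a])
    (fun c a b => by
      rw [sympOmega_comm, sympOmega_smul_left, sympOmega_comm b a, smul_eq_mul])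

lemma sympB_apply {n : ℕ} (v w : PV n) : sympB n v w = sympOmega v w := rfl

lemma sympB_isRefl (n : ℕ) : (sympB n).IsRefl := by
  intro x y h
  rw [sympB_apply, sympOmega_comm]
  exact h

lemma sympB_nondegenerate (n : ℕ) : (sympB n).Nondegenerate := by
  refine (sympB_isRefl n).nondegenerate_iff_separatingLeft.2 ?_
  intro x hx
  funext j
  have h1 := hx (Pi.single j ((0 : ZMod 2), (1 : ZMod 2)))
  have h2 := hx (Pi.single j ((1 : ZMod 2), (0 : ZMod 2)))
  rw [sympB_apply] at h1 h2
  unfold sympOmega at h1 h2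
  rw [Finset.sum_eq_single j (fun b _ hb => by simp [Pi.single_eq_of_ne hb])
    (by simp)] at h1 h2
  simp at h1 h2
  ext <;> simp [h1, h2]

lemma sPerp_eq_orthogonal {n : ℕ} (S : Submodule (ZMod 2) (PV n)) :
    sPerp S = (sympB n).orthogonal S := by
  ext P
  constructor
  · intro h Q hQ
    show sympB n Q P = 0
    rw [sympB_apply, sympOmega_comm]
    exact h Q hQ
  · intro h Q hQ
    rw [sympOmega_comm]
    exact h Q hQ

lemma finrank_PV (n : ℕ) : Module.finrank (ZMod 2) (PV n) = 2 * n := by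
  rw [Module.finrank_pi_fintype]
  simp [Module.finrank_prod]
  ring

lemma trunc_trunc (n i : ℕ) (P : PV n) : trunc n i (trunc n i P) = trunc n i P := by
  funext j
  by_cases h : (j : ℕ) < i <;> simp [trunc, h]

lemma card_submodule {M : Type*} [AddCommGroup M] [Module (ZMod 2) M] [Finite M]
    (W : Submodule (ZMod 2) M) :
    Nat.card W = 2 ^ Module.finrank (ZMod 2) W := by
  haveI : Fintype W := Fintype.ofFinite W
  rw [Nat.card_eq_fintype_card, Module.card_eq_pow_finrank (K := ZMod 2)]
  norm_num

/-- Lower bound on the trellis state-space size: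
|fᵢ(S^⊥)| · |Cᵢᵖ| · |Cᵢᶠ| ≥ |S^⊥| = 2^{n+k}. -/
theorem wolff_state_space_lower_bound (n k : ℕ) (hk : k ≤ n)
    (S : Submodule (ZMod 2) (PV n))
    (Sgen : Fin (n - k) → PV n) (hind : LinearIndependent (ZMod 2) Sgen)
    (hspan : Submodule.span (ZMod 2) (Set.range Sgen) = S)
    (i : ℕ) (hi : i ≤ n) :
    Nat.card ((fun (P : PV n) (j : Fin (n - k)) =>
          sympOmega (Sgen j) (trunc n i P)) '' (sPerp S : Set (PV n)))
        * Nat.card ↥(sPerp S ⊓ LinearMap.ker (LinearMap.id - trunc n i))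
        * Nat.card ↥(sPerp S ⊓ LinearMap.ker (trunc n i))
      ≥ Nat.card (sPerp S) ∧
    Nat.card (sPerp S) = 2 ^ (n + k) := by
  classical
  have hrS : Module.finrank (ZMod 2) S = n - k := by
    rw [← hspan, finrank_span_eq_card hind]
    simp
  have hrperp : Module.finrank (ZMod 2) (sPerp S) = n + k := by
    rw [sPerp_eq_orthogonal,
      LinearMap.BilinForm.finrank_orthogonal (sympB_nondegenerate n),
      finrank_PV, hrS]
    omega
  refine ⟨?_, by rw [card_submodule, hrperp]⟩
  set G : PV n →ₗ[ZMod 2] (Fin (n - k) → ZMod 2) :=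
    LinearMap.pi (fun j => (sympB n (Sgen j)).comp (trunc n i)) with hGdef
  have himg : (fun (P : PV n) (j : Fin (n - k)) =>
      sympOmega (Sgen j) (trunc n i P)) '' (sPerp S : Set (PV n))
      = ↑(Submodule.map G (sPerp S)) := by
    rw [Submodule.map_coe]
    rfl
  set Cp := sPerp S ⊓ LinearMap.ker (LinearMap.id - trunc n i) with hCp
  set Cf := sPerp S ⊓ LinearMap.ker (trunc n i) with hCf
  -- the kernel is contained in Cp ⊔ Cf
  have hincl : sPerp S ⊓ LinearMap.ker G ≤ Cp ⊔ Cf := by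
    rintro P ⟨hP, hPk⟩
    have hGP : ∀ j, sympOmega (Sgen j) (trunc n i P) = 0 := by
      intro j
      exact congrFun (LinearMap.mem_ker.1 hPk) j
    have htP : trunc n i P ∈ sPerp S := by
      intro Q hQ
      rw [← hspan] at hQ
      induction hQ using Submodule.span_induction with
      | mem x hx =>
        obtain ⟨j, rfl⟩ := hx
        rw [sympOmega_comm]
        exact hGP j
      | zero => simp [sympOmega]
      | add x y _ _ hx hy =>
        rw [sympOmega_comm, sympOmega_add_left, sympOmega_comm x, sympOmega_comm y, hx, hy,
          add_zero]
      | smul c x _ hx =>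
        rw [sympOmega_comm, sympOmega_smul_left, sympOmega_comm x, hx, mul_zero]
    refine Submodule.mem_sup.2 ⟨trunc n i P, ⟨htP, ?_⟩, P - trunc n i P,
      ⟨sub_mem hP htP, ?_⟩, by abel⟩
    · simp [LinearMap.mem_ker, LinearMap.sub_apply, trunc_trunc]
    · simp [LinearMap.mem_ker, map_sub, trunc_trunc]
  -- rank-nullity for G restricted to sPerp S
  have hrn := LinearMap.finrank_range_add_finrank_ker (G.domRestrict (sPerp S))
  rw [LinearMap.range_domRestrict] at hrn
  have hkerr : Module.finrank (ZMod 2) (LinearMap.ker (G.domRestrict (sPerp S)))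
      = Module.finrank (ZMod 2) (sPerp S ⊓ LinearMap.ker G : Submodule (ZMod 2) (PV n)) := by
    rw [LinearMap.ker_domRestrict,
      ← Submodule.finrank_map_subtype_eq (sPerp S) ((LinearMap.ker G).comap (sPerp S).subtype),
      Submodule.map_comap_subtype]
  rw [hkerr] at hrn
  have hsup := Submodule.finrank_sup_add_finrank_inf_eq Cp Cf
  have hmono : Module.finrank (ZMod 2) (sPerp S ⊓ LinearMap.ker G : Submodule (ZMod 2) (PV n))
      ≤ Module.finrank (ZMod 2) (Cp ⊔ Cf : Submodule (ZMod 2) (PV n)) :=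
    Submodule.finrank_mono hincl
  have hcimg : Nat.card ((Submodule.map G (sPerp S) : Set (Fin (n - k) → ZMod 2))) =
      2 ^ Module.finrank (ZMod 2) (Submodule.map G (sPerp S)) :=
    card_submodule (Submodule.map G (sPerp S))
  rw [himg, hcimg, card_submodule, card_submodule, card_submodule, ← pow_add, ← pow_add]
  exact Nat.pow_le_pow_right (by norm_num) (by omega)
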